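/- For all real a > 0 and s > 0, ∫_0^∞ Erfc(a / (2√t)) e^{-st} dt = e^{-a√s} / s. -/

import Mathlib

/-!
Writing `Erfc` as an integral turns the Laplace transform into the integral of
`e^{-st} e^{-u²}` over the region `t, u > 0`, `u > a / (2√t)`, i.e. `t > a² / (4u²)`.
Integrating first in `t` (Fubini) leaves `s⁻¹ ∫₀^∞ exp (-u² - b²/u²) du` with `b = a√s / 2`.
This equals `e^{-2b} ∫₀^∞ exp (-(u - b/u)²) du`, and that integrand is invariant under
`u ↦ b/u`; hence the substitution `w = u - b/u`, `dw = (1 + b/u²) du`, a bijection of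
`(0, ∞)` onto `ℝ`, turns twice its integral into the Gaussian integral `√π`.
-/

open Real MeasureTheory

/-- Complementary error function Erfc(x) := (2/√π) ∫_x^∞ e^{-u²} du. -/
noncomputable def Erfc (x : ℝ) : ℝ :=
  (2 / Real.sqrt Real.pi) * ∫ u in Set.Ioi x, Real.exp (-u ^ 2)

open Set

section Substitution

variable {E : Type*} [NormedAddCommGroup E] [NormedSpace ℝ E] {b : ℝ}

lemma setIntegral_Ioi_indicator_Ioi {c x : ℝ} (hcx : c ≤ x) (f : ℝ → E) :
    ∫ u in Ioi c, (Ioi x).indicator f u = ∫ u in Ioi x, f u := by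
  rw [setIntegral_indicator measurableSet_Ioi, Ioi_inter_Ioi, max_eq_right hcx]

lemma image_const_div_Ioi_zero (hb : 0 < b) : (b / ·) '' Ioi (0 : ℝ) = Ioi 0 := by
  ext x
  refine ⟨?_, fun hx => ⟨b / x, div_pos hb hx, div_div_cancel₀ hb.ne'⟩⟩
  rintro ⟨y, hy, rfl⟩
  exact div_pos hb hy

lemma injOn_const_div_Ioi_zero (hb : 0 < b) : InjOn (b / ·) (Ioi (0 : ℝ)) := fun x _ y _ h => by
  simpa only [div_div_cancel₀ hb.ne'] using congrArg (b / ·) h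

lemma hasDerivWithinAt_const_div {x : ℝ} (hx : x ≠ 0) (s : Set ℝ) :
    HasDerivWithinAt (b / ·) (-(b / x ^ 2)) s x := by
  simpa only [div_eq_mul_inv, mul_neg] using ((hasDerivAt_inv hx).const_mul b).hasDerivWithinAt

theorem integral_Ioi_div_sq_smul_comp_const_div (hb : 0 < b) (g : ℝ → E) :
    ∫ u in Ioi 0, (b / u ^ 2) • g (b / u) = ∫ u in Ioi 0, g u := by
  have hsubst := integral_image_eq_integral_abs_deriv_smul measurableSet_Ioi
    (fun x hx => hasDerivWithinAt_const_div (mem_Ioi.mp hx).ne' _) (injOn_const_div_Ioi_zero hb) g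
  rw [image_const_div_Ioi_zero hb] at hsubst
  rw [hsubst]
  refine setIntegral_congr_fun measurableSet_Ioi fun x hx => ?_
  rw [abs_neg, abs_of_pos (div_pos hb (pow_pos hx 2))]

theorem integrableOn_Ioi_div_sq_smul_comp_const_div_iff (hb : 0 < b) (g : ℝ → E) :
    IntegrableOn (fun u => (b / u ^ 2) • g (b / u)) (Ioi 0) ↔ IntegrableOn g (Ioi 0) := by
  have hsubst := integrableOn_image_iff_integrableOn_abs_deriv_smul measurableSet_Ioi
    (fun x hx => hasDerivWithinAt_const_div (mem_Ioi.mp hx).ne' _) (injOn_const_div_Ioi_zero hb) g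
  rw [image_const_div_Ioi_zero hb] at hsubst
  rw [hsubst]
  refine integrableOn_congr_fun (fun x hx => ?_) measurableSet_Ioi
  rw [abs_neg, abs_of_pos (div_pos hb (pow_pos (mem_Ioi.mp hx) 2))]

end Substitution

section Glasser

variable {b : ℝ}

lemma integrableOn_exp_neg_sub_div_sq (b : ℝ) :
    IntegrableOn (fun u => exp (-(u - b / u) ^ 2)) (Ioi 0) := by
  have hdom : Integrable fun u : ℝ => exp (2 * b) * exp (-u ^ 2) := by
    simpa [neg_one_mul] using (integrable_exp_neg_mul_sq one_pos).const_mul (exp (2 * b))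
  refine hdom.integrableOn.mono' (by fun_prop) ?_
  filter_upwards [ae_restrict_mem measurableSet_Ioi] with u hu
  rw [norm_of_nonneg (exp_pos _).le, ← exp_add, exp_le_exp]
  have hexpand : (u - b / u) ^ 2 = u ^ 2 - 2 * b + (b / u) ^ 2 := by
    field_simp [ne_of_gt (mem_Ioi.mp hu)]; ring
  nlinarith [sq_nonneg (b / u)]

lemma strictMonoOn_sub_const_div (hb : 0 < b) : StrictMonoOn (fun u => u - b / u) (Ioi 0) :=
  fun _ hx _ _ hxy => sub_lt_sub hxy (div_lt_div_of_pos_left hb hx hxy)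

lemma image_sub_const_div_Ioi_zero (hb : 0 < b) : (fun u => u - b / u) '' Ioi 0 = univ := by
  refine eq_univ_of_forall fun w => ?_
  -- the positive root of `u ^ 2 - w * u - b = 0`
  have hr := sq_sqrt (by positivity : 0 ≤ w ^ 2 + 4 * b)
  have hwr : |w| < √(w ^ 2 + 4 * b) := by
    rw [← sqrt_sq_eq_abs]; exact sqrt_lt_sqrt (sq_nonneg w) (by linarith)
  have hpos : 0 < w + √(w ^ 2 + 4 * b) := by linarith [neg_abs_le w]
  refine ⟨(w + √(w ^ 2 + 4 * b)) / 2, div_pos hpos two_pos, ?_⟩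
  field_simp
  linear_combination hr

theorem integral_Ioi_exp_neg_sub_div_sq (hb : 0 < b) :
    ∫ u in Ioi 0, exp (-(u - b / u) ^ 2) = √π / 2 := by
  set f : ℝ → ℝ := fun u => exp (-(u - b / u) ^ 2)
  have hf : IntegrableOn f (Ioi 0) := integrableOn_exp_neg_sub_div_sq b
  have hf_inv : ∀ u ∈ Ioi (0 : ℝ), (b / u ^ 2) • f (b / u) = b / u ^ 2 * f u := fun u _ => by
    simp only [f, smul_eq_mul, div_div_cancel₀ hb.ne', sub_sq_comm]
  have hsym : ∫ u in Ioi 0, b / u ^ 2 * f u = ∫ u in Ioi 0, f u := by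
    rw [← integral_Ioi_div_sq_smul_comp_const_div hb f,
      setIntegral_congr_fun measurableSet_Ioi hf_inv]
  have hf' : IntegrableOn (fun u => b / u ^ 2 * f u) (Ioi 0) :=
    ((integrableOn_Ioi_div_sq_smul_comp_const_div_iff hb f).2 hf).congr_fun hf_inv measurableSet_Ioi
  have hderiv : ∀ x ∈ Ioi (0 : ℝ),
      HasDerivWithinAt (fun u => u - b / u) (1 + b / x ^ 2) (Ioi 0) x := fun x hx => by
    simpa only [sub_neg_eq_add] using
      (hasDerivAt_id' x).hasDerivWithinAt.fun_sub (hasDerivWithinAt_const_div (mem_Ioi.mp hx).ne' _)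
  have hsubst := integral_image_eq_integral_abs_deriv_smul measurableSet_Ioi hderiv
    (strictMonoOn_sub_const_div hb).injOn fun w => exp (-w ^ 2)
  rw [image_sub_const_div_Ioi_zero hb, Measure.restrict_univ] at hsubst
  have hgauss : ∫ w : ℝ, exp (-w ^ 2) = √π := by simpa using integral_gaussian 1
  have htwice : √π = 2 * ∫ u in Ioi 0, f u := by
    calc √π = ∫ u in Ioi 0, (f u + b / u ^ 2 * f u) := by
          rw [← hgauss, hsubst]
          refine setIntegral_congr_fun measurableSet_Ioi fun x hx => ?_
          rw [abs_of_pos (by positivity), smul_eq_mul]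
          ring
      _ = 2 * ∫ u in Ioi 0, f u := by rw [integral_add hf hf', hsym]; ring
  linarith

theorem integral_Ioi_exp_neg_sq_sub_sq_div_sq (hb : 0 < b) :
    ∫ u in Ioi 0, exp (-u ^ 2 - b ^ 2 / u ^ 2) = √π / 2 * exp (-(2 * b)) := by
  rw [← integral_Ioi_exp_neg_sub_div_sq hb, ← integral_mul_const]
  refine setIntegral_congr_fun measurableSet_Ioi fun u hu => ?_
  rw [← exp_add]
  congr 1
  field_simp [ne_of_gt (mem_Ioi.mp hu)]
  ring

end Glasser

lemma integral_Ioi_exp_neg_mul {s : ℝ} (hs : 0 < s) (c : ℝ) :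
    ∫ t in Ioi c, exp (-s * t) = exp (-s * c) / s := by
  rw [integral_exp_mul_Ioi (neg_lt_zero.mpr hs), div_neg, neg_div, neg_neg]

section Kernel

variable {a s : ℝ}

noncomputable def erfcLaplaceKernel (a s : ℝ) : ℝ × ℝ → ℝ :=
  {q : ℝ × ℝ | a ^ 2 < 4 * q.2 ^ 2 * q.1}.indicator fun q => exp (-s * q.1) * exp (-q.2 ^ 2)

lemma integrable_erfcLaplaceKernel (hs : 0 < s) :
    Integrable (erfcLaplaceKernel a s)
      ((volume.restrict (Ioi 0)).prod (volume.restrict (Ioi 0))) := by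
  have hexp : IntegrableOn (fun t => exp (-s * t)) (Ioi 0) :=
    integrableOn_exp_mul_Ioi (neg_lt_zero.mpr hs) 0
  have hgauss : IntegrableOn (fun u => exp (-u ^ 2)) (Ioi 0) := by
    simpa using (integrable_exp_neg_mul_sq one_pos).integrableOn
  exact (hexp.mul_prod hgauss).indicator (measurableSet_lt (by fun_prop) (by fun_prop))

lemma erfcLaplaceKernel_apply_of_pos {t u : ℝ} (ha : 0 ≤ a) (ht : 0 < t) (hu : 0 < u) :
    erfcLaplaceKernel a s (t, u)
      = (Ioi (a / (2 * √t))).indicator (fun u => exp (-u ^ 2)) u * exp (-s * t) := by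
  have hmem : a ^ 2 < 4 * u ^ 2 * t ↔ a / (2 * √t) < u := by
    rw [div_lt_iff₀ (by positivity), ← pow_lt_pow_iff_left₀ ha (by positivity) two_ne_zero,
      mul_pow, mul_pow, sq_sqrt ht.le]
    ring_nf
  simp only [erfcLaplaceKernel, indicator_apply, mem_ofPred_eq, mem_Ioi, hmem]
  split_ifs <;> ring

lemma erfcLaplaceKernel_apply {t u : ℝ} (hu : 0 < u) :
    erfcLaplaceKernel a s (t, u)
      = (Ioi (a ^ 2 / (4 * u ^ 2))).indicator (fun t => exp (-s * t)) t * exp (-u ^ 2) := by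
  have hmem : a ^ 2 < 4 * u ^ 2 * t ↔ a ^ 2 / (4 * u ^ 2) < t := by
    rw [div_lt_iff₀ (by positivity), mul_comm]
  simp only [erfcLaplaceKernel, indicator_apply, mem_ofPred_eq, mem_Ioi, hmem]
  split_ifs <;> ring

lemma erfc_mul_exp_eq_integral_erfcLaplaceKernel (ha : 0 ≤ a) {t : ℝ} (ht : 0 < t) :
    Erfc (a / (2 * √t)) * exp (-s * t)
      = 2 / √π * ∫ u in Ioi 0, erfcLaplaceKernel a s (t, u) := by
  rw [setIntegral_congr_fun measurableSet_Ioi fun u hu => erfcLaplaceKernel_apply_of_pos ha ht hu,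
    integral_mul_const, setIntegral_Ioi_indicator_Ioi (by positivity), Erfc, mul_assoc]

lemma integral_erfcLaplaceKernel_fst (hs : 0 < s) {u : ℝ} (hu : 0 < u) :
    ∫ t in Ioi 0, erfcLaplaceKernel a s (t, u)
      = exp (-u ^ 2 - (a * √s / 2) ^ 2 / u ^ 2) / s := by
  rw [setIntegral_congr_fun measurableSet_Ioi fun t _ => erfcLaplaceKernel_apply hu,
    integral_mul_const, setIntegral_Ioi_indicator_Ioi (by positivity), integral_Ioi_exp_neg_mul hs,
    div_mul_eq_mul_div, ← exp_add]
  congr 2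
  field_simp
  rw [sq_sqrt hs.le]
  ring

end Kernel

/-- For a > 0 and s > 0,
∫_0^∞ Erfc(a/(2√t)) e^{-st} dt = e^{-a√s}/s. -/
theorem stmt_15 (a s : ℝ) (ha : 0 < a) (hs : 0 < s) :
    ∫ t in Set.Ioi (0 : ℝ), Erfc (a / (2 * Real.sqrt t)) * Real.exp (-s * t)
      = Real.exp (-a * Real.sqrt s) / s := by
  calc ∫ t in Ioi 0, Erfc (a / (2 * √t)) * exp (-s * t)
      = 2 / √π * ∫ t in Ioi 0, ∫ u in Ioi 0, erfcLaplaceKernel a s (t, u) := by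
        rw [← integral_const_mul]
        exact setIntegral_congr_fun measurableSet_Ioi fun t ht =>
          erfc_mul_exp_eq_integral_erfcLaplaceKernel ha.le ht
    _ = 2 / √π * ∫ u in Ioi 0, ∫ t in Ioi 0, erfcLaplaceKernel a s (t, u) := by
        rw [integral_integral_swap (f := fun t u => erfcLaplaceKernel a s (t, u))
          (integrable_erfcLaplaceKernel hs)]
    _ = 2 / √π * ∫ u in Ioi 0, exp (-u ^ 2 - (a * √s / 2) ^ 2 / u ^ 2) / s := by
        rw [setIntegral_congr_fun measurableSet_Ioi fun u hu =>
          integral_erfcLaplaceKernel_fst hs hu]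
    _ = exp (-a * √s) / s := by
        rw [integral_div, integral_Ioi_exp_neg_sq_sub_sq_div_sq (by positivity)]
        field_simp
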